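/- Let n, k ∈ ℕ with 1 ≤ k and 2k ≤ n. Partition {1,…,n} into 2k blocks D_1,…,D_{2k}, each of size ⌊n/(2k)⌋ or ⌈n/(2k)⌉, and let 𝓘 be the family of unions of exactly k of these blocks. Then: (i) |𝓘| = C(2k,k); (ii) every I ∈ 𝓘 satisfies |I| ≤ n − k⌊n/(2k)⌋; and (iii) for any indices i_1,…,i_k ∈ {1,…,n} there exists I ∈ 𝓘 with {i_1,…,i_k} ⊆ I. -/
import Mathlib


theorem stmt4 (n k : ℕ) (hk : 1 ≤ k) (hkn : 2 * k ≤ n)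
    (D : Fin (2 * k) → Finset (Fin n))
    (hdisj : Pairwise fun i j => Disjoint (D i) (D j))
    (hcover : Finset.univ.biUnion D = Finset.univ)
    (hsize : ∀ i, (D i).card = n / (2 * k) ∨ (D i).card = (n + 2 * k - 1) / (2 * k)) :
    (((Finset.powersetCard k (Finset.univ : Finset (Fin (2 * k)))).image
        (fun J => J.biUnion D)).card = Nat.choose (2 * k) k) ∧
    (∀ s ∈ (Finset.powersetCard k (Finset.univ : Finset (Fin (2 * k)))).image
        (fun J => J.biUnion D), s.card ≤ n - k * (n / (2 * k))) ∧
    (∀ f : Fin k → Fin n, ∃ s ∈ (Finset.powersetCard k (Finset.univ : Finset (Fin (2 * k)))).image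
        (fun J => J.biUnion D), ∀ j, f j ∈ s) := by
  have hfloor : 1 ≤ n / (2 * k) := by
    have : 0 < 2 * k := by omega
    exact (Nat.one_le_div_iff this).mpr hkn
  have hcardlb : ∀ i, n / (2 * k) ≤ (D i).card := by
    intro i
    rcases hsize i with h | h
    · omega
    · rw [h]; exact Nat.div_le_div_right (by omega)
  have hne : ∀ i, (D i).Nonempty := fun i =>
    Finset.card_pos.mp (lt_of_lt_of_le hfloor (hcardlb i))
  -- injectivity
  have hinj : ∀ J ∈ Finset.powersetCard k (Finset.univ : Finset (Fin (2 * k))),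
      ∀ J' ∈ Finset.powersetCard k (Finset.univ : Finset (Fin (2 * k))),
      J.biUnion D = J'.biUnion D → J = J' := by
    have key : ∀ J J' : Finset (Fin (2 * k)), J.biUnion D = J'.biUnion D → J ⊆ J' := by
      intro J J' h i hi
      obtain ⟨x, hx⟩ := hne i
      have : x ∈ J'.biUnion D := by
        rw [← h]; exact Finset.mem_biUnion.mpr ⟨i, hi, hx⟩
      obtain ⟨j, hj, hxj⟩ := Finset.mem_biUnion.mp this
      rcases eq_or_ne i j with rfl | hij
      · exact hj
      · exact absurd (Finset.disjoint_left.mp (hdisj hij) hx hxj) (fun h => h)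
    intro J _ J' _ h
    exact le_antisymm (key J J' h) (key J' J h.symm)
  -- sum of all block cards = n
  have hsum : ∑ i, (D i).card = n := by
    have := Finset.card_biUnion (s := (Finset.univ : Finset (Fin (2 * k)))) (t := D)
      (fun i _ j _ hij => hdisj hij)
    rw [hcover] at this
    simpa using this.symm
  have hbicard : ∀ J : Finset (Fin (2 * k)), (J.biUnion D).card = ∑ i ∈ J, (D i).card :=
    fun J => Finset.card_biUnion (fun i _ j _ hij => hdisj hij)
  refine ⟨?_, ?_, ?_⟩
  · rw [Finset.card_image_of_injOn hinj, Finset.card_powersetCard, Finset.card_univ,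
      Fintype.card_fin]
  · intro s hs
    obtain ⟨J, hJ, rfl⟩ := Finset.mem_image.mp hs
    rw [Finset.mem_powersetCard] at hJ
    rw [hbicard]
    have hsplit : ∑ i ∈ J, (D i).card + ∑ i ∈ Jᶜ, (D i).card = n := by
      rw [Finset.sum_add_sum_compl]; exact hsum
    have hcompl : k * (n / (2 * k)) ≤ ∑ i ∈ Jᶜ, (D i).card := by
      calc k * (n / (2 * k)) = ∑ _i ∈ Jᶜ, n / (2 * k) := by
            rw [Finset.sum_const, smul_eq_mul, Finset.card_compl, Fintype.card_fin, hJ.2]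
            congr 1; omega
        _ ≤ ∑ i ∈ Jᶜ, (D i).card := Finset.sum_le_sum (fun i _ => hcardlb i)
    omega
  · intro f
    have hex : ∀ j : Fin k, ∃ i, f j ∈ D i := by
      intro j
      have : f j ∈ Finset.univ.biUnion D := by rw [hcover]; exact Finset.mem_univ _
      obtain ⟨i, _, hi⟩ := Finset.mem_biUnion.mp this
      exact ⟨i, hi⟩
    choose g hg using hex
    have hcard : (Finset.image g Finset.univ).card ≤ k := by
      calc (Finset.image g Finset.univ).card ≤ (Finset.univ : Finset (Fin k)).card :=
            Finset.card_image_le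
        _ = k := by simp
    obtain ⟨J, hgJ, hJcard⟩ := Finset.exists_superset_card_eq hcard
      (by rw [Fintype.card_fin]; omega)
    refine ⟨J.biUnion D, Finset.mem_image.mpr ⟨J, Finset.mem_powersetCard.mpr
      ⟨Finset.subset_univ _, hJcard⟩, rfl⟩, ?_⟩
    intro j
    exact Finset.mem_biUnion.mpr ⟨g j, hgJ (Finset.mem_image_of_mem g (Finset.mem_univ j)), hg j⟩
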